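/- The language L = {w a^n b^m : w ∈ {a,b}*, m ≤ n} is not recognised by any history-deterministic VASS with coverability acceptance, in any dimension k. -/

import Mathlib

open scoped Classical

/-- A `k`-dimensional vector addition system with states over alphabet `A`.
States are `Fin n`; transitions are labelled by a letter and an effect in `ℤ^k`. -/
structure VASS (k : ℕ) (A : Type) where
  n : ℕ
  trans : Set (Fin n × A × (Fin k → ℤ) × Fin n)
  init : Fin n
  acc : Set (Fin n)

namespace VASS

variable {k : ℕ} {A : Type}

/-- A configuration: a state together with counters in `ℕ^k`. -/
abbrev Conf (V : VASS k A) := Fin V.n × (Fin k → ℕ)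

/-- `Run V c w c'`: there is a valid run of `V` from configuration `c` to `c'`
reading the word `w`, with counters staying nonnegative throughout. -/
inductive Run (V : VASS k A) : V.Conf → List A → V.Conf → Prop
  | nil (c : V.Conf) : Run V c [] c
  | cons {q : Fin V.n} {v : Fin k → ℕ} {a : A} {d : Fin k → ℤ} {q' : Fin V.n}
      {w : List A} {c' : V.Conf} :
      (q, a, d, q') ∈ V.trans →
      (∀ i, 0 ≤ (v i : ℤ) + d i) →
      Run V (q', fun i => ((v i : ℤ) + d i).toNat) w c' →
      Run V (q, v) (a :: w) c'

/-- The initial configuration: initial state with all counters zero. -/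
def initConf (V : VASS k A) : V.Conf := (V.init, fun _ => 0)

/-- Coverability acceptance: some run ends in an accepting state. -/
def LangCover (V : VASS k A) : Set (List A) :=
  {w | ∃ c, V.Run V.initConf w c ∧ c.1 ∈ V.acc}

/-- Reachability acceptance: some run ends in an accepting state with all counters zero. -/
def LangReach (V : VASS k A) : Set (List A) :=
  {w | ∃ c, V.Run V.initConf w c ∧ c.1 ∈ V.acc ∧ c.2 = fun _ => 0}

/-- Deterministic: at most one outgoing transition per state and letter. -/
def Det (V : VASS k A) : Prop :=
  ∀ q a d₁ q₁ d₂ q₂, (q, a, d₁, q₁) ∈ V.trans → (q, a, d₂, q₂) ∈ V.trans →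
    d₁ = d₂ ∧ q₁ = q₂

/-- A resolver: given the history (the word read so far) and the next letter,
choose the effect and target state of the transition to take. -/
def Resolver (V : VASS k A) := List A → A → (Fin k → ℤ) × Fin V.n

/-- One step of the run built by a resolver (carrying the prefix read so far). -/
noncomputable def resStep (V : VASS k A) (r : V.Resolver) :
    (List A × Option V.Conf) → A → (List A × Option V.Conf) :=
  fun p a =>
    (p.1 ++ [a],
      p.2.bind fun c =>
        let t := r p.1 a
        if (c.1, a, t.1, t.2) ∈ V.trans ∧ ∀ i, 0 ≤ ((c.2 i : ℤ) + t.1 i) then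
          some (t.2, fun i => ((c.2 i : ℤ) + t.1 i).toNat)
        else none)

/-- The configuration reached by following the resolver on `w` (if the run survives). -/
noncomputable def resRun (V : VASS k A) (r : V.Resolver) (w : List A) : Option V.Conf :=
  (w.foldl (V.resStep r) ([], some V.initConf)).2

/-- History-determinism for coverability acceptance:
some resolver's run accepts every word of the language. -/
def HDCover (V : VASS k A) : Prop :=
  ∃ r : V.Resolver, ∀ w ∈ V.LangCover,
    ∃ c, V.resRun r w = some c ∧ c.1 ∈ V.acc

/-- History-determinism for reachability acceptance. -/
def HDReach (V : VASS k A) : Prop :=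
  ∃ r : V.Resolver, ∀ w ∈ V.LangReach,
    ∃ c, V.resRun r w = some c ∧ c.1 ∈ V.acc ∧ c.2 = fun _ => 0

/-- Coverability language of a VASS with ε-transitions (letter `none` is silent):
the input word is the sequence of actual letters read. -/
def LangCoverE (V : VASS k (Option A)) : Set (List A) :=
  {w | ∃ u c, V.Run V.initConf u c ∧ u.reduceOption = w ∧ c.1 ∈ V.acc}

/-- Reachability language of a VASS with ε-transitions. -/
def LangReachE (V : VASS k (Option A)) : Set (List A) :=
  {w | ∃ u c, V.Run V.initConf u c ∧ u.reduceOption = w ∧ c.1 ∈ V.acc ∧ c.2 = fun _ => 0}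

/-- History-determinism with ε-transitions, coverability: a resolver together with a
(prefix-monotone) scheduling of silent moves accepts every word of the language. -/
def HDCoverE (V : VASS k (Option A)) : Prop :=
  ∃ (r : V.Resolver) (f : List A → List (Option A)),
    (∀ u w, u <+: w → f u <+: f w) ∧
    ∀ w ∈ V.LangCoverE, (f w).reduceOption = w ∧
      ∃ c, V.resRun r (f w) = some c ∧ c.1 ∈ V.acc

/-- History-determinism with ε-transitions, reachability. -/
def HDReachE (V : VASS k (Option A)) : Prop :=
  ∃ (r : V.Resolver) (f : List A → List (Option A)),
    (∀ u w, u <+: w → f u <+: f w) ∧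
    ∀ w ∈ V.LangReachE, (f w).reduceOption = w ∧
      ∃ c, V.resRun r (f w) = some c ∧ c.1 ∈ V.acc ∧ c.2 = fun _ => 0

end VASS

inductive AB | a | b
deriving DecidableEq

open AB List

/-- The language `(a+b)^* a^n b^{≤ n}` (the last block of `a`s is followed by
at most as many `b`s). -/
def L4 : Set (List AB) :=
  {w | ∃ u n m, m ≤ n ∧ (1 ≤ n ∨ u = []) ∧ w = u ++ replicate n a ++ replicate m b}

section AuxV

open VASS

variable {k : ℕ} {A : Type} {V : VASS k A}

theorem run_append {z : List A} {c'' : V.Conf} :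
    ∀ {c c' : V.Conf} {u : List A}, V.Run c u c' → V.Run c' z c'' → V.Run c (u ++ z) c'' := by
  intro c c' u h1
  induction h1 with
  | nil => exact fun h2 => h2
  | cons ht hn _ ih => exact fun h2 => .cons ht hn (ih h2)

theorem run_mono (e : Fin k → ℕ) :
    ∀ {c c' : V.Conf} {u : List A}, V.Run c u c' →
      V.Run (c.1, fun i => c.2 i + e i) u (c'.1, fun i => c'.2 i + e i) := by
  intro c c' u h
  induction h with
  | nil => exact .nil _
  | @cons q v a d q' w c' ht hn _ ih =>
      refine .cons ht (fun i => ?_) ?_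
      · exact (by have := hn i; push_cast; omega : (0:ℤ) ≤ ((v i + e i : ℕ) : ℤ) + d i)
      · have h2 : V.Run (q', fun i => (((v i : ℤ) + d i).toNat + e i)) w
            (c'.1, fun i => c'.2 i + e i) := ih
        have h3 : (fun i => ((v i : ℤ) + d i).toNat + e i)
            = fun i => (((v i + e i : ℕ) : ℤ) + d i).toNat := by
          funext i; have := hn i; omega
        rw [h3] at h2
        exact h2

theorem foldl_resStep_fst (r : V.Resolver) :
    ∀ (w : List A) (p : List A × Option V.Conf),
      (w.foldl (V.resStep r) p).1 = p.1 ++ w := by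
  intro w
  induction w with
  | nil => intro p; simp
  | cons x w ih => intro p; rw [List.foldl_cons, ih]; simp [VASS.resStep]

theorem foldl_resStep_none (r : V.Resolver) :
    ∀ (w : List A) (p : List A), (w.foldl (V.resStep r) (p, none)).2 = none := by
  intro w
  induction w with
  | nil => intro p; rfl
  | cons x w ih => intro p; rw [List.foldl_cons]; exact ih _

theorem run_of_foldl (r : V.Resolver) :
    ∀ (w : List A) (p : List A) (c c' : V.Conf),
      (w.foldl (V.resStep r) (p, some c)).2 = some c' → V.Run c w c' := by
  intro w
  induction w with
  | nil =>
      intro p c c' h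
      simp only [List.foldl_nil] at h
      injection h with h
      rw [← h]; exact .nil _
  | cons x w ih =>
      intro p c c' h
      obtain ⟨q, v⟩ := c
      rw [List.foldl_cons] at h
      by_cases hc : ((q, x, (r p x).1, (r p x).2) ∈ V.trans ∧ ∀ i, 0 ≤ ((v i : ℤ) + (r p x).1 i))
      · have hstep : V.resStep r (p, some (q, v)) x
            = (p ++ [x], some ((r p x).2, fun i => ((v i : ℤ) + (r p x).1 i).toNat)) := by
          simp [VASS.resStep, hc]
        rw [hstep] at h
        exact .cons hc.1 hc.2 (ih _ _ _ h)
      · have hstep : V.resStep r (p, some (q, v)) x = (p ++ [x], none) := by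
          simp [VASS.resStep, hc]
        rw [hstep] at h
        rw [foldl_resStep_none] at h
        cases h

theorem resRun_run {r : V.Resolver} {w : List A} {c : V.Conf}
    (h : V.resRun r w = some c) : V.Run V.initConf w c :=
  run_of_foldl r w [] _ _ h

theorem resRun_append_run {r : V.Resolver} {u z : List A} {c c' : V.Conf}
    (hu : V.resRun r u = some c) (huz : V.resRun r (u ++ z) = some c') :
    V.Run c z c' := by
  have hfold : u.foldl (V.resStep r) ([], some V.initConf) = (u, some c) := by
    refine Prod.ext ?_ hu
    simpa using foldl_resStep_fst r u ([], some V.initConf)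
  have h2 : V.resRun r (u ++ z) = (z.foldl (V.resStep r) (u, some c)).2 := by
    rw [VASS.resRun, List.foldl_append, hfold]
  rw [h2] at huz
  exact run_of_foldl r z u c c' huz

theorem resRun_prefix_some {r : V.Resolver} {u z : List A} {c' : V.Conf}
    (huz : V.resRun r (u ++ z) = some c') : ∃ c, V.resRun r u = some c := by
  cases h : V.resRun r u with
  | some c => exact ⟨c, rfl⟩
  | none =>
      exfalso
      have hfold : u.foldl (V.resStep r) ([], some V.initConf) = (u, none) := by
        refine Prod.ext ?_ h
        simpa using foldl_resStep_fst r u ([], some V.initConf)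
      rw [VASS.resRun, List.foldl_append, hfold, foldl_resStep_none] at huz
      cases huz

theorem dickson_pair {N : ℕ} (f : ℕ → Fin N × (Fin k → ℕ)) :
    ∃ s t : ℕ, s < t ∧ (f s).1 = (f t).1 ∧ ∀ i, (f s).2 i ≤ (f t).2 i := by
  classical
  set G : ℕ → (Fin N ⊕ Fin k → ℕ) := fun n =>
    Sum.elim (fun q => if q = (f n).1 then 1 else 0) (fun i => (f n).2 i) with hG
  have hpwo : (Set.univ : Set (Fin N ⊕ Fin k → ℕ)).IsPWO :=
    Set.isPWO_of_wellQuasiOrderedLE Set.univ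
  obtain ⟨s, t, hst, hle⟩ := Set.PartiallyWellOrderedOn.exists_lt hpwo (fun n => Set.mem_univ (G n))
  have hle' : ∀ x, G s x ≤ G t x := fun x => hle x
  refine ⟨s, t, hst, ?_, fun i => hle' (Sum.inr i)⟩
  have h1 := hle' (Sum.inl (f s).1)
  by_contra hne
  simp [hG, hne] at h1

end AuxV

section Aux2

open VASS

variable {k : ℕ} {V : VASS k AB}

theorem run_pump {q : Fin V.n} {v δ : Fin k → ℕ} {ℓ : ℕ}
    (h : V.Run (q, v) (replicate ℓ a) (q, fun i => v i + δ i)) (m : ℕ) :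
    V.Run (q, v) (replicate (m * ℓ) a) (q, fun i => v i + m * δ i) := by
  induction m with
  | zero =>
      have h0 : (fun i => v i + 0 * δ i) = v := by funext i; omega
      rw [h0]
      simpa using VASS.Run.nil (V := V) (q, v)
  | succ m ih =>
      have hword : replicate ((m + 1) * ℓ) a = replicate (m * ℓ) a ++ replicate ℓ a := by
        rw [Nat.succ_mul, List.replicate_add]
      rw [hword]
      have h2 := run_mono (e := fun i => m * δ i) h
      have h3 : V.Run (q, fun i => v i + m * δ i) (replicate ℓ a)
          (q, fun i => (v i + δ i) + m * δ i) := h2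
      have h4 : (fun i => (v i + δ i) + m * δ i) = fun i => v i + (m + 1) * δ i := by
        funext i; ring
      rw [h4] at h3
      exact run_append ih h3

end Aux2

theorem mem_L4 (u : List AB) (n m : ℕ) (hmn : m ≤ n) (h1 : 1 ≤ n) :
    u ++ replicate n a ++ replicate m b ∈ L4 := ⟨u, n, m, hmn, Or.inl h1, rfl⟩

theorem rep_b_a_eq : ∀ (m j : ℕ) (y z : List AB),
    replicate m b ++ a :: y = replicate j b ++ a :: z → m = j ∧ y = z := by
  intro m
  induction m with
  | zero =>
      intro j y z h
      cases j with
      | zero => simp at h; exact ⟨rfl, h⟩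
      | succ j => rw [List.replicate_succ] at h; simp at h
  | succ m ih =>
      intro j y z h
      cases j with
      | zero => rw [List.replicate_succ] at h; simp at h
      | succ j =>
          rw [List.replicate_succ, List.replicate_succ] at h
          injection h with _ h
          obtain ⟨h1, h2⟩ := ih j y z h
          exact ⟨by omega, h2⟩

theorem rep_a_le : ∀ (n i : ℕ) (u z : List AB),
    replicate n a ++ u = replicate i a ++ b :: z → n ≤ i := by
  intro n
  induction n with
  | zero => intro i u z _; exact Nat.zero_le i
  | succ n ih =>
      intro i u z h
      cases i with
      | zero => rw [List.replicate_succ] at h; simp at h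
      | succ i =>
          rw [List.replicate_succ, List.replicate_succ] at h
          injection h with _ h
          exact Nat.succ_le_succ (ih i u z h)

theorem rep_b_ne : ∀ (m j : ℕ) (z : List AB), replicate m b ≠ replicate j b ++ a :: z := by
  intro m
  induction m with
  | zero => intro j z h; cases j <;> simp [List.replicate_succ] at h
  | succ m ih =>
      intro j z h
      cases j with
      | zero => rw [List.replicate_succ] at h; simp at h
      | succ j =>
          rw [List.replicate_succ, List.replicate_succ] at h
          injection h with _ h
          exact ih j z h

theorem not_mem_L4 (x : List AB) (i j : ℕ) (hi : 1 ≤ i) (hij : i < j) :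
    x ++ [b] ++ replicate i a ++ replicate j b ∉ L4 := by
  rintro ⟨u, n, m, hmn, hn1, heq⟩
  obtain ⟨i', rfl⟩ : ∃ i', i = i' + 1 := ⟨i - 1, by omega⟩
  have hrev := congrArg List.reverse heq
  simp only [List.reverse_append, List.reverse_replicate, List.reverse_cons,
    List.reverse_singleton, List.append_assoc, List.singleton_append,
    List.nil_append] at hrev
  rw [show replicate (i' + 1) AB.a = AB.a :: replicate i' AB.a from rfl,
    List.cons_append] at hrev
  rcases Nat.eq_zero_or_pos n with rfl | hn
  · have hu : u = [] := hn1.resolve_left (by omega)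
    subst hu
    simp only [List.replicate_zero, List.reverse_nil, List.nil_append,
      List.append_nil] at hrev
    exact rep_b_ne m j _ hrev.symm
  · obtain ⟨n', rfl⟩ : ∃ n', n = n' + 1 := ⟨n - 1, by omega⟩
    rw [show replicate (n' + 1) AB.a = AB.a :: replicate n' AB.a from rfl,
      List.cons_append] at hrev
    obtain ⟨hjm, htail⟩ := rep_b_a_eq j m _ _ hrev
    have hle := rep_a_le n' i' _ _ htail.symm
    omega

/-- `L4` is not recognised by any history-deterministic VASS with coverability
acceptance, in any dimension. -/
theorem stmt4 : ¬ ∃ (k : ℕ) (V : VASS k AB), V.HDCover ∧ V.LangCover = L4 := by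
  rintro ⟨k, V, ⟨r, hr⟩, hL⟩
  have hacc : ∀ w ∈ L4, ∃ c, V.resRun r w = some c ∧ c.1 ∈ V.acc := fun w hw =>
    hr w (by rw [hL]; exact hw)
  -- the resolver survives reading any number of a's after any history
  have hdef : ∀ (w : List AB) (n : ℕ), ∃ c, V.resRun r (w ++ replicate n a) = some c := by
    intro w n
    obtain ⟨c, hc, -⟩ := hacc (w ++ replicate (n + 1) a ++ replicate (n + 1) b)
      (mem_L4 w (n + 1) (n + 1) le_rfl (by omega))
    have hsplit : w ++ replicate (n + 1) a ++ replicate (n + 1) b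
        = (w ++ replicate n a) ++ ([a] ++ replicate (n + 1) b) := by
      rw [List.replicate_succ' (n := n) (a := AB.a)]
      simp [List.append_assoc]
    rw [hsplit] at hc
    exact resRun_prefix_some hc
  choose C hC using hdef
  -- Dickson's lemma inside each a-block
  have hdk : ∀ w : List AB, ∃ i j : ℕ, 1 ≤ i ∧ i < j ∧ (C w i).1 = (C w j).1 ∧
      ∀ x, (C w i).2 x ≤ (C w j).2 x := by
    intro w
    obtain ⟨s, t, hst, h1, h2⟩ := dickson_pair (fun n => C w (n + 1))
    exact ⟨s + 1, t + 1, by omega, by omega, h1, h2⟩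
  choose iw jw hiw hij hq hle using hdk
  -- effect of the non-decreasing cycle found in the a-block after w
  set dl : List AB → Fin k → ℕ :=
    fun w i => (C w (jw w)).2 i - (C w (iw w)).2 i with hdl
  -- the rounds
  set nxt : List AB → List AB :=
    fun w => w ++ replicate (jw w) a ++ replicate (jw w) b with hnxt
  set hist : ℕ → List AB := fun t => nxt^[t] [] with hhist
  have hist_succ : ∀ t, hist (t + 1) = nxt (hist t) := fun t =>
    Function.iterate_succ_apply' nxt t []
  have hj1 : ∀ w, 1 ≤ jw w := fun w => le_of_lt (lt_of_le_of_lt (hiw w) (hij w))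
  have hpre : ∀ s t : ℕ, s ≤ t → hist s <+: hist t := by
    intro s t h
    induction h with
    | refl => exact List.prefix_rfl
    | step h2 ih =>
        rename_i u
        refine ih.trans ?_
        rw [hist_succ u]
        exact ⟨replicate (jw (hist u)) a ++ replicate (jw (hist u)) b,
          by simp [hnxt, List.append_assoc]⟩
  have hend : ∀ t, ∃ x, hist (t + 1) = x ++ [b] := by
    intro t
    refine ⟨hist t ++ replicate (jw (hist t)) a ++ replicate (jw (hist t) - 1) b, ?_⟩
    rw [hist_succ]
    have hrep : replicate (jw (hist t)) b = replicate (jw (hist t) - 1) b ++ [b] := by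
      conv_lhs => rw [show jw (hist t) = (jw (hist t) - 1) + 1 from by
        have := hj1 (hist t); omega]
      rw [List.replicate_succ']
    simp only [hnxt]
    rw [hrep]
    simp [List.append_assoc]
  -- pigeonhole on the supports of the cycle effects
  obtain ⟨S, T, hST, hsup⟩ : ∃ S T : ℕ, S < T ∧
      ∀ i : Fin k, 0 < dl (hist T) i → 0 < dl (hist S) i := by
    obtain ⟨s, t, hne, hfe⟩ := Finite.exists_ne_map_eq_of_infinite
      (fun n : ℕ => (fun i : Fin k => decide (0 < dl (hist n) i)))
    have hiff : ∀ i, 0 < dl (hist s) i ↔ 0 < dl (hist t) i := by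
      intro i
      have := congrFun hfe i
      exact decide_eq_decide.mp this
    rcases Nat.lt_or_ge s t with h | h
    · exact ⟨s, t, h, fun i hi => (hiff i).mpr hi⟩
    · exact ⟨t, s, by omega, fun i hi => (hiff i).mp hi⟩
  obtain ⟨T', rfl⟩ : ∃ T', T = T' + 1 := ⟨T - 1, by omega⟩
  set ws := hist S with hws
  set wt := hist (T' + 1) with hwt
  set m := (∑ i : Fin k, dl wt i) + 1 with hm
  have hm1 : 1 ≤ m := by rw [hm]; omega
  have hmδ : ∀ i, dl wt i ≤ (m - 1) * dl ws i := by
    intro i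
    rcases Nat.eq_zero_or_pos (dl wt i) with h0 | hpos
    · simp [h0]
    · have hs : 0 < dl ws i := hsup i hpos
      calc dl wt i ≤ ∑ x : Fin k, dl wt x :=
            Finset.single_le_sum (fun x _ => Nat.zero_le _) (Finset.mem_univ i)
        _ = m - 1 := by rw [hm]; omega
        _ ≤ (m - 1) * dl ws i := Nat.le_mul_of_pos_right _ hs
  -- the cycle run in round S and its pumping
  have hcyc : V.Run (C ws (iw ws)) (replicate (jw ws - iw ws) a) (C ws (jw ws)) := by
    refine resRun_append_run (hC ws (iw ws)) ?_
    have heq : (ws ++ replicate (iw ws) a) ++ replicate (jw ws - iw ws) a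
        = ws ++ replicate (jw ws) a := by
      rw [List.append_assoc, ← List.replicate_add,
        Nat.add_sub_cancel' (le_of_lt (hij ws))]
    rw [heq]
    exact hC ws (jw ws)
  have hCjs : C ws (jw ws) = ((C ws (iw ws)).1, fun i => (C ws (iw ws)).2 i + dl ws i) := by
    refine Prod.ext (hq ws).symm ?_
    funext i
    have h1 := hle ws i
    show (C ws (jw ws)).2 i = (C ws (iw ws)).2 i + dl ws i
    have h2 : dl ws i = (C ws (jw ws)).2 i - (C ws (iw ws)).2 i := rfl
    omega
  rw [hCjs] at hcyc
  have hpump := run_pump hcyc m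
  -- the copied resolver run from round S to round T
  obtain ⟨x, hx⟩ := hend T'
  rw [← hwt] at hx
  have F1 : ws ++ replicate (jw ws) a ++ [b] <+: wt := by
    have h1 : hist (S + 1) <+: hist (T' + 1) := hpre _ _ (by omega)
    have h2 : ws ++ replicate (jw ws) a ++ [b] <+: hist (S + 1) := by
      rw [hist_succ]
      refine ⟨replicate (jw ws - 1) b, ?_⟩
      simp only [hnxt]
      have hrep : replicate (jw ws) b = [b] ++ replicate (jw ws - 1) b := by
        conv_lhs => rw [show jw ws = (jw ws - 1) + 1 from by have := hj1 ws; omega]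
        rfl
      rw [← hws, hrep]
      simp [List.append_assoc]
    exact h2.trans h1
  have hPx : ws ++ replicate (jw ws) a <+: x := by
    refine List.prefix_of_prefix_length_le (l₃ := wt) ?_ ?_ ?_
    · exact (List.prefix_append (ws ++ replicate (jw ws) a) [b]).trans F1
    · rw [hx]; exact List.prefix_append x [b]
    · have hl := F1.length_le
      rw [hx] at hl
      simp only [List.length_append, List.length_replicate] at hl ⊢
      omega
  obtain ⟨y, hy⟩ := hPx
  have hsuf : wt ++ replicate (iw wt) a
      = (ws ++ replicate (jw ws) a) ++ (y ++ ([b] ++ replicate (iw wt) a)) := by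
    rw [hx, ← hy]
    simp [List.append_assoc]
  have R3 : V.Run (C ws (jw ws)) (y ++ ([b] ++ replicate (iw wt) a)) (C wt (iw wt)) := by
    refine resRun_append_run (hC ws (jw ws)) ?_
    rw [← hsuf]
    exact hC wt (iw wt)
  have hEq1 : (((C ws (jw ws)).1, fun i => (C ws (jw ws)).2 i + (m - 1) * dl ws i) : V.Conf)
      = ((C ws (iw ws)).1, fun i => (C ws (iw ws)).2 i + m * dl ws i) := by
    refine Prod.ext (hq ws).symm ?_
    funext i
    show (C ws (jw ws)).2 i + (m - 1) * dl ws i = (C ws (iw ws)).2 i + m * dl ws i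
    have h1 := hle ws i
    have h2 : dl ws i = (C ws (jw ws)).2 i - (C ws (iw ws)).2 i := rfl
    have h3 : m * dl ws i = (m - 1) * dl ws i + dl ws i := by
      conv_lhs => rw [show m = (m - 1) + 1 from by omega]
      rw [Nat.succ_mul]
    omega
  have R3' := run_mono (e := fun i => (m - 1) * dl ws i) R3
  rw [hEq1] at R3'
  -- the accepting b-run of round T, shifted
  have hL4t : wt ++ replicate (jw wt) a ++ replicate (jw wt) b ∈ L4 :=
    mem_L4 wt (jw wt) (jw wt) le_rfl (hj1 wt)
  obtain ⟨cf, hcf, hcfacc⟩ := hacc _ hL4t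
  have R4 : V.Run (C wt (jw wt)) (replicate (jw wt) b) cf :=
    resRun_append_run (hC wt (jw wt)) hcf
  have hEq2 : (((C wt (jw wt)).1,
        fun i => (C wt (jw wt)).2 i + ((m - 1) * dl ws i - dl wt i)) : V.Conf)
      = ((C wt (iw wt)).1, fun i => (C wt (iw wt)).2 i + (m - 1) * dl ws i) := by
    refine Prod.ext (hq wt).symm ?_
    funext i
    show (C wt (jw wt)).2 i + ((m - 1) * dl ws i - dl wt i)
        = (C wt (iw wt)).2 i + (m - 1) * dl ws i
    have h1 := hle wt i
    have h2 := hmδ i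
    have h3 : dl wt i = (C wt (jw wt)).2 i - (C wt (iw wt)).2 i := rfl
    omega
  have R4' := run_mono (e := fun i => (m - 1) * dl ws i - dl wt i) R4
  rw [hEq2] at R4'
  -- assemble the full run and the contradiction
  have Rinit : V.Run V.initConf (ws ++ replicate (iw ws) a) (C ws (iw ws)) :=
    resRun_run (hC ws (iw ws))
  have Rfull := run_append Rinit (run_append hpump (run_append R3' R4'))
  have hmem : (ws ++ replicate (iw ws) a) ++ (replicate (m * (jw ws - iw ws)) a
      ++ ((y ++ ([b] ++ replicate (iw wt) a)) ++ replicate (jw wt) b)) ∈ V.LangCover :=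
    ⟨_, Rfull, hcfacc⟩
  rw [hL] at hmem
  have hshape : (ws ++ replicate (iw ws) a) ++ (replicate (m * (jw ws - iw ws)) a
      ++ ((y ++ ([b] ++ replicate (iw wt) a)) ++ replicate (jw wt) b))
      = (ws ++ replicate (iw ws) a ++ replicate (m * (jw ws - iw ws)) a ++ y) ++ [b]
        ++ replicate (iw wt) a ++ replicate (jw wt) b := by
    simp only [List.append_assoc]
  rw [hshape] at hmem
  exact not_mem_L4 _ (iw wt) (jw wt) (hiw wt) (hij wt) hmem
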